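/- For every n ≥ 3 there exists a PFA with state set Q = {1,2,…,n} and exactly 2n−3 symbols such that the subset {n−2, n−1, n} is carefully synchronized by some word and the shortest word carefully synchronizing {n−2, n−1, n} has length exactly C(n,3) + C(n,2), where C denotes the binomial coefficient. -/

import Mathlib

/-- Action of a PFA (partial) transition function on a subset of states along a word:
one step maps `S` to `{δ q a : q ∈ S}` if `δ q a` is defined for all `q ∈ S`,
and to `∅` otherwise. -/
def pfaRun {n m : ℕ} (δ : Fin n → Fin m → Option (Fin n)) :
    Finset (Fin n) → List (Fin m) → Finset (Fin n)
  | S, [] => S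
  | S, a :: w =>
      pfaRun δ
        (if ∀ q ∈ S, (δ q a).isSome then S.image (fun q => (δ q a).getD q) else ∅) w

/-- A word `w` carefully synchronizes the subset `S` in the PFA `δ`. -/
def pfaSync {n m : ℕ} (δ : Fin n → Fin m → Option (Fin n)) (S : Finset (Fin n))
    (w : List (Fin m)) : Prop :=
  (pfaRun δ S w).card = 1

/-- `l` is the length of a shortest word carefully synchronizing `S` in the PFA `δ`. -/
def pfaShortestSync {n m : ℕ} (δ : Fin n → Fin m → Option (Fin n)) (S : Finset (Fin n))
    (l : ℕ) : Prop :=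
  (∃ w, pfaSync δ S w ∧ w.length = l) ∧ ∀ w, pfaSync δ S w → l ≤ w.length

/-!
Relabel the states as `0, …, n - 1`. The letter `shift i` fixes the states below `i` and
sends `i ↦ i + 1`, `n - 1 ↦ i + 2`; `back b` sends `b, n - 2, n - 1 ↦ b - 1, b, b + 1`;
`merge` sends `0 ↦ 0` and `n - 2, n - 1 ↦ 1`; all other transitions are undefined.

Give a pair `{x < z}` the potential `C(n-1-x, 2) + (n - z)` and a triple `{a < y < z}` the
potential `C(n,2) + C(n,3) - C(n-a,3) + C(n-1-y, 2) + (n - z)`. A case check shows that no letter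
lowers the potential by more than one, and that some letter lowers it by exactly one: push the top
state up with `shift z`, restart from `n - 1` with `shift y`, step down with `back a`, or `merge`.
Since singletons have potential `0`, the potential is the length of a shortest carefully
synchronizing word, and for `{n - 3, n - 2, n - 1}` it equals `C(n,3) + C(n,2)`.
-/

open Finset

section PartialRun

variable {α β σ : Type*} [DecidableEq α] [DecidableEq β]

def partialStep (f : α → σ → Option α) (S : Finset α) (a : σ) : Finset α :=
  if ∀ q ∈ S, (f q a).isSome then S.image fun q => (f q a).getD q else ∅

def partialRun (f : α → σ → Option α) : Finset α → List σ → Finset α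
  | S, [] => S
  | S, a :: w => partialRun f (partialStep f S a) w

variable {f : α → σ → Option α}

theorem pfaRun_eq_partialRun {n m : ℕ} (δ : Fin n → Fin m → Option (Fin n))
    (S : Finset (Fin n)) (w : List (Fin m)) : pfaRun δ S w = partialRun δ S w := by
  induction w generalizing S with
  | nil => rfl
  | cons a w ih =>
    rw [pfaRun, partialRun, partialStep, ih]
    -- the two `if`s are decided by different `Decidable` instances
    congr 1
    split_ifs <;> rfl

@[simp]
theorem partialRun_empty (w : List σ) : partialRun f ∅ w = ∅ := by
  induction w with
  | nil => rfl
  | cons a w ih => simpa [partialRun, partialStep] using ih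

theorem mem_partialStep {S : Finset α} {a : σ} {q' : α} (h : q' ∈ partialStep f S a) :
    ∃ q ∈ S, f q a = some q' := by
  unfold partialStep at h
  split_ifs at h with hS
  · obtain ⟨q, hq, rfl⟩ := mem_image.mp h
    obtain ⟨p, hp⟩ := Option.isSome_iff_exists.mp (hS q hq)
    exact ⟨q, hq, by simp [hp]⟩
  · simp at h

theorem card_partialStep_le (S : Finset α) (a : σ) : (partialStep f S a).card ≤ S.card := by
  unfold partialStep
  split_ifs
  · exact card_image_le
  · exact (card_empty).trans_le (Nat.zero_le _)

theorem isSome_of_partialStep_nonempty {S : Finset α} {a : σ}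
    (h : (partialStep f S a).Nonempty) {q : α} (hq : q ∈ S) : (f q a).isSome := by
  unfold partialStep at h
  split_ifs at h with hS
  · exact hS q hq
  · simp at h

theorem partialStep_pair {x z x' z' : α} {a : σ} (hx : f x a = some x') (hz : f z a = some z') :
    partialStep f {x, z} a = {x', z'} := by
  simp [partialStep, hx, hz]

theorem partialStep_triple {x y z x' y' z' : α} {a : σ} (hx : f x a = some x')
    (hy : f y a = some y') (hz : f z a = some z') :
    partialStep f {x, y, z} a = {x', y', z'} := by
  simp [partialStep, hx, hy, hz]

theorem map_partialRun (e : α ↪ β) {g : β → σ → Option β}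
    (hfg : ∀ q a, (f q a).map e = g (e q) a) (S : Finset α) (w : List σ) :
    (partialRun f S w).map e = partialRun g (S.map e) w := by
  induction w generalizing S with
  | nil => rfl
  | cons a w ih =>
    suffices h : (partialStep f S a).map e = partialStep g (S.map e) a by
      rw [partialRun, ih, h]; rfl
    have hsome : ∀ q, (g (e q) a).isSome = (f q a).isSome := fun q => by simp [← hfg]
    unfold partialStep
    by_cases h : ∀ q ∈ S, (f q a).isSome
    · rw [if_pos h, if_pos (by simpa [hsome] using h), map_eq_image, map_eq_image,
        image_image, image_image]
      refine image_congr fun q hq => ?_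
      obtain ⟨p, hp⟩ := Option.isSome_iff_exists.mp (h q hq)
      have hg := hfg q a
      rw [hp] at hg
      simp [hp, ← hg]
    · rw [if_neg h, if_neg (by simpa [hsome] using h), map_empty]

theorem le_length_of_card_partialRun_eq_one (Φ : Finset α → ℕ)
    (hstep : ∀ S a, (partialStep f S a).Nonempty → Φ S ≤ Φ (partialStep f S a) + 1)
    (hone : ∀ S : Finset α, S.card = 1 → Φ S = 0) {S : Finset α} {w : List σ}
    (hw : (partialRun f S w).card = 1) : Φ S ≤ w.length := by
  induction w generalizing S with
  | nil => exact (hone S hw).le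
  | cons a w ih =>
    have hne : (partialStep f S a).Nonempty := by
      rw [nonempty_iff_ne_empty]
      rintro h
      rw [partialRun, h, partialRun_empty] at hw
      simp at hw
    exact (hstep S a hne).trans (Nat.add_le_add_right (ih hw) 1)

theorem exists_card_partialRun_eq_one (Φ : Finset α → ℕ) (R : Finset α → Prop)
    (hR : ∀ S a, R S → (partialStep f S a).Nonempty → R (partialStep f S a))
    (hzero : ∀ S, R S → Φ S = 0 → S.card = 1)
    (hdesc : ∀ S, R S → 0 < Φ S →
      ∃ a, (partialStep f S a).Nonempty ∧ Φ (partialStep f S a) + 1 = Φ S)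
    {S : Finset α} (hS : R S) :
    ∃ w : List σ, (partialRun f S w).card = 1 ∧ w.length = Φ S := by
  induction hk : Φ S generalizing S with
  | zero => exact ⟨[], hzero S hS hk, rfl⟩
  | succ k ih =>
    obtain ⟨a, hne, ha⟩ := hdesc S hS (by omega)
    obtain ⟨w, hw, hlen⟩ := ih (hR S a hS hne) (by omega)
    exact ⟨a :: w, hw, by simp [hlen]⟩

end PartialRun

namespace Finset

variable {α : Type*} [LinearOrder α]

theorem sort_pair {x z : α} (h : x < z) : ({x, z} : Finset α).sort = [x, z] := by
  rw [sort_insert _ (by simpa using h.le) (by simpa using h.ne), sort_singleton]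

theorem sort_triple {a y z : α} (hay : a < y) (hyz : y < z) :
    ({a, y, z} : Finset α).sort = [a, y, z] := by
  rw [sort_insert _ (by simp [hay.le, (hay.trans hyz).le])
    (by simp [hay.ne, (hay.trans hyz).ne]), sort_pair hyz]

theorem exists_eq_pair_of_card_eq_two {S : Finset α} (h : S.card = 2) :
    ∃ x z, x < z ∧ S = {x, z} := by
  obtain ⟨x, z, hs⟩ := List.length_eq_two.mp ((S.length_sort (· ≤ ·)).trans h)
  have hlt := List.sortedLT_iff_pairwise.mp S.sortedLT_sort
  rw [hs] at hlt
  refine ⟨x, z, by simpa using hlt, ?_⟩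
  rw [← S.sort_toFinset (· ≤ ·), hs]
  simp

theorem exists_eq_triple_of_card_eq_three {S : Finset α} (h : S.card = 3) :
    ∃ a y z, a < y ∧ y < z ∧ S = {a, y, z} := by
  obtain ⟨a, y, z, hs⟩ := List.length_eq_three.mp ((S.length_sort (· ≤ ·)).trans h)
  have hlt := List.sortedLT_iff_pairwise.mp S.sortedLT_sort
  rw [hs] at hlt
  refine ⟨a, y, z, List.rel_of_pairwise_cons hlt (by simp),
    List.rel_of_pairwise_cons hlt.of_cons (by simp), ?_⟩
  rw [← S.sort_toFinset (· ≤ ·), hs]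
  simp

end Finset

theorem Nat.succ_choose_two (m : ℕ) : (m + 1).choose 2 = m.choose 2 + m := by
  rw [Nat.choose_succ_succ', Nat.choose_one_right, add_comm]

namespace SlowTriple

inductive Letter
  | shift (i : ℕ)
  | back (b : ℕ)
  | merge

open Letter

def act (n q : ℕ) : Letter → Option ℕ
  | shift i =>
    if q < i then some q else if q = i then some (i + 1)
    else if q = n - 1 ∧ i + 3 ≤ n then some (i + 2) else none
  | back b =>
    if q = b then some (b - 1) else if q = n - 2 then some b
    else if q = n - 1 then some (b + 1) else none
  | merge => if q = 0 then some 0 else if q = n - 2 ∨ q = n - 1 then some 1 else none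

def Letter.Valid (n : ℕ) : Letter → Prop
  | shift i => i + 2 ≤ n
  | back b => 1 ≤ b ∧ b + 3 ≤ n
  | merge => True

def decode (n i : ℕ) : Letter :=
  if i + 2 ≤ n then shift i else if i + 5 ≤ 2 * n then back (i + 2 - n) else merge

variable {n : ℕ}

theorem valid_decode (i : ℕ) : (decode n i).Valid n := by
  unfold decode
  split_ifs <;> simp only [Letter.Valid] <;> omega

theorem exists_decode_eq (hn : 3 ≤ n) {l : Letter} (hl : l.Valid n) :
    ∃ a : Fin (2 * n - 3), decode n a = l := by
  cases l with
  | shift i => exact ⟨⟨i, by simp only [Letter.Valid] at hl; omega⟩, if_pos hl⟩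
  | back b =>
    obtain ⟨hb, hb'⟩ := hl
    refine ⟨⟨n - 2 + b, by omega⟩, ?_⟩
    simp only [decode, if_neg (show ¬ n - 2 + b + 2 ≤ n by omega),
      if_pos (show n - 2 + b + 5 ≤ 2 * n by omega)]
    congr 1
    omega
  | merge =>
    refine ⟨⟨2 * n - 4, by omega⟩, ?_⟩
    simp only [decode, if_neg (show ¬ 2 * n - 4 + 2 ≤ n by omega),
      if_neg (show ¬ 2 * n - 4 + 5 ≤ 2 * n by omega)]

theorem act_lt {l : Letter} (hl : l.Valid n) {q q' : ℕ} (hq : q < n)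
    (h : act n q l = some q') : q' < n := by
  cases l <;> simp only [Letter.Valid] at hl <;> simp only [act] at h <;>
    split_ifs at h <;> simp only [Option.some.injEq] at h <;> omega

theorem act_shift {q q' i : ℕ} :
    act n q (shift i) = some q' ↔
      q < i ∧ q' = q ∨ q = i ∧ q' = i + 1 ∨ q = n - 1 ∧ i + 3 ≤ n ∧ q' = i + 2 := by
  simp only [act]
  split_ifs <;> simp only [Option.some.injEq, false_iff] <;> omega

theorem act_back {q q' b : ℕ} (hb : (back b).Valid n) :
    act n q (back b) = some q' ↔
      q = b ∧ q' = b - 1 ∨ q = n - 2 ∧ q' = b ∨ q = n - 1 ∧ q' = b + 1 := by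
  simp only [Letter.Valid] at hb
  simp only [act]
  split_ifs <;> simp only [Option.some.injEq, false_iff] <;> omega

theorem act_merge (hn : 3 ≤ n) {q q' : ℕ} :
    act n q merge = some q' ↔ q = 0 ∧ q' = 0 ∨ (q = n - 2 ∨ q = n - 1) ∧ q' = 1 := by
  simp only [act]
  split_ifs <;> simp only [Option.some.injEq, false_iff] <;> omega

def δ (n : ℕ) (q : Fin n) (a : Fin (2 * n - 3)) : Option (Fin n) :=
  (act n q (decode n a)).pmap Fin.mk fun _ => act_lt (valid_decode a) q.isLt

theorem map_val_δ (q : Fin n) (a : Fin (2 * n - 3)) :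
    (δ n q a).map Fin.val = act n q (decode n a) := by
  simp [δ, Option.map_pmap]

def potential₂ (n x z : ℕ) : ℕ := (n - 1 - x).choose 2 + (n - z)

def potential₃ (n a y z : ℕ) : ℕ :=
  n.choose 2 + n.choose 3 - (n - a).choose 3 + potential₂ n y z

def potential (n : ℕ) (S : Finset ℕ) : ℕ :=
  match S.sort with
  | [x, z] => potential₂ n x z
  | [a, y, z] => potential₃ n a y z
  | _ => 0

theorem potential_pair {x z : ℕ} (h : x < z) : potential n {x, z} = potential₂ n x z := by
  rw [potential, sort_pair h]

theorem potential_triple {a y z : ℕ} (hay : a < y) (hyz : y < z) :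
    potential n {a, y, z} = potential₃ n a y z := by
  rw [potential, sort_triple hay hyz]

theorem potential_of_card_ne {S : Finset ℕ} (h2 : S.card ≠ 2) (h3 : S.card ≠ 3) :
    potential n S = 0 := by
  have hlen := S.length_sort (· ≤ ·)
  unfold potential
  split
  · next heq => rw [heq] at hlen; exact absurd hlen.symm h2
  · next heq => rw [heq] at hlen; exact absurd hlen.symm h3
  · rfl

theorem potential_singleton (q : ℕ) : potential n {q} = 0 :=
  potential_of_card_ne (by simp) (by simp)

theorem potential₂_pos {x z : ℕ} (hz : z < n) : 0 < potential₂ n x z := by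
  unfold potential₂; omega

theorem potential₂_anti {x z x' z' : ℕ} (hx : x' ≤ x) (hz : z' ≤ z) :
    potential₂ n x z ≤ potential₂ n x' z' := by
  have := Nat.choose_le_choose 2 (show n - 1 - x ≤ n - 1 - x' by omega)
  unfold potential₂; omega

theorem potential₂_climb {x z : ℕ} (hz : z < n) :
    potential₂ n x (z + 1) + 1 = potential₂ n x z := by
  unfold potential₂; omega

theorem potential₂_advance {x : ℕ} (hx : x + 3 ≤ n) :
    potential₂ n (x + 1) (x + 2) + 1 = potential₂ n x (n - 1) := by
  have : (n - 1 - x).choose 2 = (n - 2 - x).choose 2 + (n - 2 - x) := by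
    rw [show n - 1 - x = n - 2 - x + 1 by omega, Nat.succ_choose_two]
  unfold potential₂
  rw [show n - 1 - (x + 1) = n - 2 - x by omega]
  omega

theorem potential₂_merge (hn : 3 ≤ n) : potential₂ n (n - 2) (n - 1) = 1 := by
  rw [potential₂, show n - 1 - (n - 2) = 1 by omega, Nat.choose_eq_zero_of_lt one_lt_two]
  omega

theorem potential₃_back {b : ℕ} (hb : 1 ≤ b) (hbn : b + 3 ≤ n) :
    potential₃ n (b - 1) b (b + 1) + 1 = potential₃ n b (n - 2) (n - 1) := by
  have h3 : (n - (b - 1)).choose 3 = (n - b).choose 2 + (n - b).choose 3 := by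
    rw [show n - (b - 1) = n - b + 1 by omega]; exact Nat.choose_succ_succ' _ _
  have h2 : (n - b).choose 2 = (n - 1 - b).choose 2 + (n - 1 - b) := by
    rw [show n - b = n - 1 - b + 1 by omega, Nat.succ_choose_two]
  have hle := Nat.choose_le_choose 3 (show n - (b - 1) ≤ n by omega)
  unfold potential₃ potential₂
  rw [show n - 1 - (n - 2) = 1 by omega, Nat.choose_eq_zero_of_lt one_lt_two]
  omega

theorem potential₃_merge (hn : 3 ≤ n) :
    potential₂ n 0 1 + 1 = potential₃ n 0 (n - 2) (n - 1) := by
  have : n.choose 2 = (n - 1).choose 2 + (n - 1) := by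
    rw [← Nat.succ_choose_two, Nat.sub_add_cancel (by omega)]
  unfold potential₃
  rw [potential₂_merge hn]
  unfold potential₂
  simp only [Nat.sub_zero]
  omega

theorem potential₃_initial (hn : 3 ≤ n) :
    potential₃ n (n - 3) (n - 2) (n - 1) = n.choose 3 + n.choose 2 := by
  have := Nat.choose_pos (show 3 ≤ n from hn)
  unfold potential₃
  rw [potential₂_merge hn, show n - (n - 3) = 3 by omega, Nat.choose_self]
  omega

theorem potential₂_le_of_act_shift {i x z x' z' : ℕ} (hxz : x < z)
    (hx : act n x (shift i) = some x') (hz : act n z (shift i) = some z') :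
    x' < z' ∧ potential₂ n x z ≤ potential₂ n x' z' + 1 := by
  rw [act_shift] at hx hz
  rcases hz with ⟨hzi, rfl⟩ | ⟨rfl, rfl⟩ | ⟨rfl, hi, rfl⟩
  · obtain rfl : x' = x := by omega
    exact ⟨hxz, by omega⟩
  · obtain rfl : x' = x := by omega
    exact ⟨by omega, by unfold potential₂; omega⟩
  · rcases hx with ⟨hxi, rfl⟩ | ⟨rfl, rfl⟩ | ⟨rfl, -, -⟩
    · exact ⟨by omega, (potential₂_anti le_rfl (by omega)).trans (Nat.le_succ _)⟩
    · exact ⟨by omega, (potential₂_advance hi).ge⟩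
    · omega

theorem potential₂_le_of_act (hn : 3 ≤ n) {l : Letter} (hl : l.Valid n) {x z x' z' : ℕ}
    (hxz : x < z) (hx : act n x l = some x') (hz : act n z l = some z') :
    potential₂ n x z ≤ potential n {x', z'} + 1 := by
  cases l with
  | shift i =>
    obtain ⟨hlt, hle⟩ := potential₂_le_of_act_shift hxz hx hz
    rwa [potential_pair hlt]
  | back b =>
    have hb : 1 ≤ b ∧ b + 3 ≤ n := hl
    rw [act_back hl] at hx hz
    rw [potential_pair (by omega)]
    exact (potential₂_anti (by omega) (by omega)).trans (Nat.le_succ _)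
  | merge =>
    rw [act_merge hn] at hx hz
    by_cases hx0 : x = 0
    · rw [potential_pair (by omega)]
      exact (potential₂_anti (by omega) (by omega)).trans (Nat.le_succ _)
    · obtain ⟨rfl, rfl, rfl, rfl⟩ : x = n - 2 ∧ z = n - 1 ∧ x' = 1 ∧ z' = 1 := by omega
      rw [pair_eq_singleton, potential_singleton, potential₂_merge hn]

theorem potential₃_le_of_act (hn : 3 ≤ n) {l : Letter} (hl : l.Valid n) {a y z a' y' z' : ℕ}
    (hay : a < y) (hyz : y < z) (ha : act n a l = some a') (hy : act n y l = some y')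
    (hz : act n z l = some z') : potential₃ n a y z ≤ potential n {a', y', z'} + 1 := by
  cases l with
  | shift i =>
    obtain ⟨hlt, hle⟩ := potential₂_le_of_act_shift hyz hy hz
    rw [act_shift] at ha hy hz
    obtain ⟨rfl, hay'⟩ : a' = a ∧ a < y' := by omega
    rw [potential_triple hay' hlt]
    unfold potential₃
    omega
  | back b =>
    have hb : 1 ≤ b ∧ b + 3 ≤ n := hl
    rw [act_back hl] at ha hy hz
    obtain ⟨rfl, rfl, rfl, rfl, rfl, rfl⟩ :
        a = b ∧ y = n - 2 ∧ z = n - 1 ∧ a' = a - 1 ∧ y' = a ∧ z' = a + 1 := by omega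
    rw [potential_triple (by omega) (by omega), potential₃_back hb.1 hb.2]
  | merge =>
    rw [act_merge hn] at ha hy hz
    obtain ⟨rfl, rfl, rfl, rfl, rfl, rfl⟩ :
        a = 0 ∧ y = n - 2 ∧ z = n - 1 ∧ a' = 0 ∧ y' = 1 ∧ z' = 1 := by omega
    rw [pair_eq_singleton, potential_pair one_pos, potential₃_merge hn]

theorem potential_le_partialStep (hn : 3 ≤ n) {l : Letter} (hl : l.Valid n) {S : Finset ℕ}
    (h : (partialStep (act n) S l).Nonempty) :
    potential n S ≤ potential n (partialStep (act n) S l) + 1 := by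
  have hdef q (hq : q ∈ S) := Option.isSome_iff_exists.mp (isSome_of_partialStep_nonempty h hq)
  by_cases h2 : S.card = 2
  · obtain ⟨x, z, hxz, rfl⟩ := exists_eq_pair_of_card_eq_two h2
    obtain ⟨x', hx⟩ := hdef x (by simp)
    obtain ⟨z', hz⟩ := hdef z (by simp)
    rw [potential_pair hxz, partialStep_pair hx hz]
    exact potential₂_le_of_act hn hl hxz hx hz
  by_cases h3 : S.card = 3
  · obtain ⟨a, y, z, hay, hyz, rfl⟩ := exists_eq_triple_of_card_eq_three h3
    obtain ⟨a', ha⟩ := hdef a (by simp)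
    obtain ⟨y', hy⟩ := hdef y (by simp)
    obtain ⟨z', hz⟩ := hdef z (by simp)
    rw [potential_triple hay hyz, partialStep_triple ha hy hz]
    exact potential₃_le_of_act hn hl hay hyz ha hy hz
  rw [potential_of_card_ne h2 h3]
  exact Nat.zero_le _

theorem exists_partialStep_pair (hn : 3 ≤ n) {x z : ℕ} (hxz : x < z) (hz : z < n) :
    ∃ l : Letter, l.Valid n ∧ (partialStep (act n) {x, z} l).Nonempty ∧
      potential n (partialStep (act n) {x, z} l) + 1 = potential₂ n x z := by
  by_cases hzn : z + 2 ≤ n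
  · refine ⟨shift z, hzn, ?_⟩
    rw [partialStep_pair ((act_shift (q' := x)).2 (by omega))
      ((act_shift (q' := z + 1)).2 (by omega)),
      potential_pair (show x < z + 1 by omega), potential₂_climb hz]
    exact ⟨insert_nonempty _ _, rfl⟩
  obtain rfl : z = n - 1 := by omega
  by_cases hxn : x + 3 ≤ n
  · refine ⟨shift x, (show x + 2 ≤ n by omega), ?_⟩
    rw [partialStep_pair ((act_shift (q' := x + 1)).2 (by omega))
      ((act_shift (q' := x + 2)).2 (by omega)), potential_pair (show x + 1 < x + 2 by omega),
      potential₂_advance hxn]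
    exact ⟨insert_nonempty _ _, rfl⟩
  obtain rfl : x = n - 2 := by omega
  refine ⟨merge, trivial, ?_⟩
  rw [partialStep_pair ((act_merge hn (q' := 1)).2 (by omega))
    ((act_merge hn (q' := 1)).2 (by omega)), pair_eq_singleton, potential_singleton,
    potential₂_merge hn]
  exact ⟨singleton_nonempty _, rfl⟩

theorem exists_partialStep_triple (hn : 3 ≤ n) {a y z : ℕ} (hay : a < y) (hyz : y < z)
    (hz : z < n) :
    ∃ l : Letter, l.Valid n ∧ (partialStep (act n) {a, y, z} l).Nonempty ∧
      potential n (partialStep (act n) {a, y, z} l) + 1 = potential₃ n a y z := by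
  by_cases hzn : z + 2 ≤ n
  · refine ⟨shift z, hzn, ?_⟩
    rw [partialStep_triple ((act_shift (q' := a)).2 (by omega))
      ((act_shift (q' := y)).2 (by omega)) ((act_shift (q' := z + 1)).2 (by omega)),
      potential_triple hay (show y < z + 1 by omega), potential₃, potential₃,
      ← potential₂_climb hz]
    exact ⟨insert_nonempty _ _, by omega⟩
  obtain rfl : z = n - 1 := by omega
  by_cases hyn : y + 3 ≤ n
  · refine ⟨shift y, (show y + 2 ≤ n by omega), ?_⟩
    rw [partialStep_triple ((act_shift (q' := a)).2 (by omega))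
      ((act_shift (q' := y + 1)).2 (by omega)) ((act_shift (q' := y + 2)).2 (by omega)),
      potential_triple (show a < y + 1 by omega) (show y + 1 < y + 2 by omega), potential₃,
      potential₃, ← potential₂_advance hyn]
    exact ⟨insert_nonempty _ _, by omega⟩
  obtain rfl : y = n - 2 := by omega
  by_cases ha : 1 ≤ a
  · have hb : (back a).Valid n := ⟨ha, by omega⟩
    refine ⟨back a, hb, ?_⟩
    rw [partialStep_triple ((act_back hb (q' := a - 1)).2 (by omega))
      ((act_back hb (q' := a)).2 (by omega)) ((act_back hb (q' := a + 1)).2 (by omega)),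
      potential_triple (show a - 1 < a by omega) (by omega), potential₃_back ha (by omega)]
    exact ⟨insert_nonempty _ _, rfl⟩
  obtain rfl : a = 0 := by omega
  refine ⟨merge, trivial, ?_⟩
  rw [partialStep_triple ((act_merge hn (q' := 0)).2 (by omega))
    ((act_merge hn (q' := 1)).2 (by omega)) ((act_merge hn (q' := 1)).2 (by omega)),
    pair_eq_singleton, potential_pair one_pos, potential₃_merge hn]
  exact ⟨insert_nonempty _ _, rfl⟩

def Admissible (n : ℕ) (S : Finset ℕ) : Prop :=
  S.Nonempty ∧ S.card ≤ 3 ∧ S ⊆ range n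

theorem admissible_partialStep {S : Finset ℕ} (hS : Admissible n S) {l : Letter}
    (hl : l.Valid n) (h : (partialStep (act n) S l).Nonempty) :
    Admissible n (partialStep (act n) S l) := by
  refine ⟨h, (card_partialStep_le S l).trans hS.2.1, fun q' hq' => ?_⟩
  obtain ⟨q, hq, hqq'⟩ := mem_partialStep hq'
  exact mem_range.2 (act_lt hl (mem_range.1 (hS.2.2 hq)) hqq')

theorem admissible_cases {S : Finset ℕ} (hS : Admissible n S) :
    (∃ q, S = {q}) ∨ (∃ x z, x < z ∧ z < n ∧ S = {x, z}) ∨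
      ∃ a y z, a < y ∧ y < z ∧ z < n ∧ S = {a, y, z} := by
  obtain ⟨hne, hcard, hrange⟩ := hS
  have hz {z : ℕ} (hz : z ∈ S) : z < n := mem_range.1 (hrange hz)
  obtain h1 | h2 | h3 : S.card = 1 ∨ S.card = 2 ∨ S.card = 3 := by
    have := hne.card_pos; omega
  · exact Or.inl (card_eq_one.mp h1)
  · obtain ⟨x, z, hxz, rfl⟩ := exists_eq_pair_of_card_eq_two h2
    exact Or.inr (Or.inl ⟨x, z, hxz, hz (by simp), rfl⟩)
  · obtain ⟨a, y, z, hay, hyz, rfl⟩ := exists_eq_triple_of_card_eq_three h3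
    exact Or.inr (Or.inr ⟨a, y, z, hay, hyz, hz (by simp), rfl⟩)

theorem card_eq_one_of_potential_eq_zero {S : Finset ℕ} (hS : Admissible n S)
    (h : potential n S = 0) : S.card = 1 := by
  rcases admissible_cases hS with
    ⟨q, rfl⟩ | ⟨x, z, hxz, hz, rfl⟩ | ⟨a, y, z, hay, hyz, hz, rfl⟩
  · exact card_singleton q
  · rw [potential_pair hxz] at h
    exact absurd h (potential₂_pos hz).ne'
  · rw [potential_triple hay hyz, potential₃] at h
    have := potential₂_pos (x := y) hz
    omega

theorem exists_partialStep_of_potential_pos (hn : 3 ≤ n) {S : Finset ℕ}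
    (hS : Admissible n S) (h : 0 < potential n S) :
    ∃ l : Letter, l.Valid n ∧ (partialStep (act n) S l).Nonempty ∧
      potential n (partialStep (act n) S l) + 1 = potential n S := by
  rcases admissible_cases hS with
    ⟨q, rfl⟩ | ⟨x, z, hxz, hz, rfl⟩ | ⟨a, y, z, hay, hyz, hz, rfl⟩
  · exact absurd (potential_singleton q) h.ne'
  · rw [potential_pair hxz]
    exact exists_partialStep_pair hn hxz hz
  · rw [potential_triple hay hyz]
    exact exists_partialStep_triple hn hay hyz hz

theorem pfaShortestSync_δ (hn : 3 ≤ n) {S : Finset (Fin n)} (hne : S.Nonempty)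
    (hcard : S.card ≤ 3) : pfaShortestSync (δ n) S (potential n (S.map Fin.valEmbedding)) := by
  let f : ℕ → Fin (2 * n - 3) → Option ℕ := fun q a => act n q (decode n a)
  have hsync w : pfaSync (δ n) S w ↔ (partialRun f (S.map Fin.valEmbedding) w).card = 1 := by
    rw [pfaSync, pfaRun_eq_partialRun, ← card_map Fin.valEmbedding,
      map_partialRun Fin.valEmbedding (g := f) fun q a => map_val_δ q a]
  have hS : Admissible n (S.map Fin.valEmbedding) :=
    ⟨hne.map, by rwa [card_map], fun q hq => by
      obtain ⟨q, -, rfl⟩ := mem_map.1 hq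
      exact mem_range.2 q.isLt⟩
  simp only [pfaShortestSync, hsync]
  constructor
  · refine exists_card_partialRun_eq_one (f := f) _ (Admissible n)
      (fun T a hT h => admissible_partialStep hT (valid_decode a) h)
      (fun T hT h => card_eq_one_of_potential_eq_zero hT h) (fun T hT h => ?_) hS
    obtain ⟨l, hl, hne, heq⟩ := exists_partialStep_of_potential_pos hn hT h
    obtain ⟨a, rfl⟩ := exists_decode_eq hn hl
    exact ⟨a, hne, heq⟩
  · exact fun w => le_length_of_card_partialRun_eq_one (f := f) _
      (fun T a h => potential_le_partialStep hn (valid_decode a) h)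
      (fun T h => potential_of_card_ne (by omega) (by omega))

end SlowTriple

theorem stmt5 (n : ℕ) (hn : 3 ≤ n) :
    ∃ δ : Fin n → Fin (2 * n - 3) → Option (Fin n),
      pfaShortestSync δ
        ({⟨n - 3, by omega⟩, ⟨n - 2, by omega⟩, ⟨n - 1, by omega⟩} : Finset (Fin n))
        (n.choose 3 + n.choose 2) := by
  refine ⟨SlowTriple.δ n, ?_⟩
  have h := SlowTriple.pfaShortestSync_δ hn (S := {⟨n - 3, by omega⟩, ⟨n - 2, by omega⟩,
    ⟨n - 1, by omega⟩}) (Finset.insert_nonempty _ _) Finset.card_le_three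
  simp only [Finset.map_insert, Finset.map_singleton, Fin.valEmbedding_apply] at h
  rwa [SlowTriple.potential_triple (by omega) (by omega), SlowTriple.potential₃_initial hn] at h
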